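/- arXiv:1904.04648 — 4 statements merged into one kernel-verified Lean document; each statement's English description precedes it below -/
import Mathlib

section
/- Let Λ > 0 and 0 < M < (1/3)√(2/Λ), and let q₁ < 0 < q₂ < q₃ be the three critical points of φ(q) = -Λq⁴ + 3q² - 6Mq. Then φ(q₁) > 0 and φ(q₂) < 0. -/
/-!
At a critical point `q` of `φ`, eliminating `Λ q⁴` with `φ'(q) = 0` gives `φ(q) = (3/2) q (q - 3M)`,
so the sign of `φ(q)` is read off from the position of `q` relative to `0` and `3M`.
Subtracting the critical equations at `q₂ < q₃` gives `2Λ (q₂² + q₂ q₃ + q₃²) = 3`, hence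
`Λ q₂² < 1/2`, and then `6M = q₂ (6 - 4Λ q₂²) > 4 q₂`. Thus `0 < q₂ < 3M`, while `q₁ < 0 < 3M`.
-/

lemma aux_eq_of_critical {Λ M q : ℝ} (hq : -4 * Λ * q ^ 3 + 6 * q - 6 * M = 0) :
    -Λ * q ^ 4 + 3 * q ^ 2 - 6 * M * q = 3 / 2 * q * (q - 3 * M) := by
  linear_combination (q / 4) * hq

lemma critical_pair_relation {Λ M p r : ℝ} (hpr : p ≠ r)
    (hp : -4 * Λ * p ^ 3 + 6 * p - 6 * M = 0) (hr : -4 * Λ * r ^ 3 + 6 * r - 6 * M = 0) :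
    2 * Λ * (p ^ 2 + p * r + r ^ 2) = 3 := by
  have hfactor : (p - r) * (2 * Λ * (p ^ 2 + p * r + r ^ 2) - 3) = 0 := by
    linear_combination (1 / 2) * hr - (1 / 2) * hp
  have := (mul_eq_zero.mp hfactor).resolve_left (sub_ne_zero.mpr hpr)
  linarith

lemma mul_sq_lt_half_of_critical_pair {Λ M p r : ℝ} (hp0 : 0 < p) (hpr : p < r)
    (hp : -4 * Λ * p ^ 3 + 6 * p - 6 * M = 0) (hr : -4 * Λ * r ^ 3 + 6 * r - 6 * M = 0) :
    Λ * p ^ 2 < 1 / 2 := by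
  have hrel := critical_pair_relation hpr.ne hp hr
  have hsum : 3 * p ^ 2 < p ^ 2 + p * r + r ^ 2 := by nlinarith
  have hΛ : 0 < Λ := by nlinarith
  nlinarith

lemma lt_three_mul_of_critical {Λ M q : ℝ} (hq0 : 0 < q) (hΛq : Λ * q ^ 2 < 1 / 2)
    (hq : -4 * Λ * q ^ 3 + 6 * q - 6 * M = 0) :
    q < 3 * M := by
  have h6M : 6 * M = q * (6 - 4 * (Λ * q ^ 2)) := by linear_combination -hq
  nlinarith

theorem aux_function_extrema_signs_general (Λ M q₁ q₂ q₃ : ℝ)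
    (h1 : q₁ < 0) (h2 : 0 < q₂) (h23 : q₂ < q₃)
    (hc1 : -4 * Λ * q₁ ^ 3 + 6 * q₁ - 6 * M = 0)
    (hc2 : -4 * Λ * q₂ ^ 3 + 6 * q₂ - 6 * M = 0)
    (hc3 : -4 * Λ * q₃ ^ 3 + 6 * q₃ - 6 * M = 0) :
    0 < -Λ * q₁ ^ 4 + 3 * q₁ ^ 2 - 6 * M * q₁ ∧
    -Λ * q₂ ^ 4 + 3 * q₂ ^ 2 - 6 * M * q₂ < 0 := by
  have hq₂M : q₂ < 3 * M :=
    lt_three_mul_of_critical h2 (mul_sq_lt_half_of_critical_pair h2 h23 hc2 hc3) hc2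
  rw [aux_eq_of_critical hc1, aux_eq_of_critical hc2]
  constructor
  · exact mul_pos_of_neg_of_neg (by linarith) (by linarith)
  · exact mul_neg_of_pos_of_neg (by linarith) (by linarith)

/-- For `Λ > 0`, `0 < M < (1/3)√(2/Λ)` and critical points `q₁ < 0 < q₂ < q₃` of
`φ(q) = -Λq⁴ + 3q² - 6Mq` (i.e. zeros of `φ'(q) = -4Λq³ + 6q - 6M`), one has
`φ(q₁) > 0` and `φ(q₂) < 0`. -/
theorem aux_function_extrema_signs (Λ M q₁ q₂ q₃ : ℝ) (hΛ : 0 < Λ)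
    (hM0 : 0 < M) (hM : M < (1 / 3) * Real.sqrt (2 / Λ))
    (h1 : q₁ < 0) (h2 : 0 < q₂) (h23 : q₂ < q₃)
    (hc1 : -4 * Λ * q₁ ^ 3 + 6 * q₁ - 6 * M = 0)
    (hc2 : -4 * Λ * q₂ ^ 3 + 6 * q₂ - 6 * M = 0)
    (hc3 : -4 * Λ * q₃ ^ 3 + 6 * q₃ - 6 * M = 0) :
    0 < -Λ * q₁ ^ 4 + 3 * q₁ ^ 2 - 6 * M * q₁ ∧
    -Λ * q₂ ^ 4 + 3 * q₂ ^ 2 - 6 * M * q₂ < 0 :=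
  aux_function_extrema_signs_general Λ M q₁ q₂ q₃ h1 h2 h23 hc1 hc2 hc3
end

section
/- Let Λ > 0, M > 0, Q ≠ 0 with Υ := -1/(8Λ³) + 9M²/(16Λ²) < 0, and let q₂ < q₃ be the two positive critical points of φ(q) = -Λq⁴ + 3q² - 6Mq. If -φ(q₃) < 3Q² < -φ(q₂), then the equation φ(q) + 3Q² = 0 has exactly three distinct positive real roots. -/
/-!
Since `q₂` and `q₃` are roots of the cubic `φ'(q) = -4Λq³ + 6q - 6M`, which has no quadratic
term, its third root is `-(q₂ + q₃) < 0`. Hence `φ` decreases on `[0, q₂]`, increases on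
`[q₂, q₃]` and decreases on `[q₃, ∞)`. The hypotheses make `φ + 3Q²` positive at `0`, negative
at `q₂`, positive at `q₃`, and it tends to `-∞`, so each of the three pieces carries exactly one
zero.
-/

open Set Filter Topology

theorem exists_three_zeros_of_strictAntiOn_of_strictMonoOn {f : ℝ → ℝ} {x₁ x₂ : ℝ}
    (hf : Continuous f) (h₁ : 0 < x₁) (h₁₂ : x₁ < x₂)
    (hanti₁ : StrictAntiOn f (Icc 0 x₁)) (hmono : StrictMonoOn f (Icc x₁ x₂))
    (hanti₂ : StrictAntiOn f (Ici x₂))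
    (h0 : 0 < f 0) (hx₁ : f x₁ < 0) (hx₂ : 0 < f x₂) (htop : Tendsto f atTop atBot) :
    ∃ a b c : ℝ, 0 < a ∧ a < b ∧ b < c ∧
      ∀ q : ℝ, 0 < q → (f q = 0 ↔ q = a ∨ q = b ∨ q = c) := by
  obtain ⟨T, hT, hx₂T⟩ : ∃ T, f T < 0 ∧ x₂ < T :=
    ((htop.eventually_lt_atBot 0).and (eventually_gt_atTop x₂)).exists
  obtain ⟨a, ⟨ha₀, ha₁⟩, hfa⟩ := intermediate_value_Ioo' h₁.le hf.continuousOn ⟨hx₁, h0⟩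
  obtain ⟨b, ⟨hb₁, hb₂⟩, hfb⟩ := intermediate_value_Ioo h₁₂.le hf.continuousOn ⟨hx₁, hx₂⟩
  obtain ⟨c, ⟨hc₂, -⟩, hfc⟩ := intermediate_value_Ioo' hx₂T.le hf.continuousOn ⟨hT, hx₂⟩
  refine ⟨a, b, c, ha₀, ha₁.trans hb₁, hb₂.trans hc₂, fun q hq => ⟨fun hfq => ?_, ?_⟩⟩
  · rcases le_or_gt q x₁ with hq₁ | hq₁
    · exact Or.inl (hanti₁.injOn ⟨hq.le, hq₁⟩ ⟨ha₀.le, ha₁.le⟩ (hfq.trans hfa.symm))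
    rcases le_or_gt q x₂ with hq₂ | hq₂
    · exact Or.inr (Or.inl (hmono.injOn ⟨hq₁.le, hq₂⟩ ⟨hb₁.le, hb₂.le⟩ (hfq.trans hfb.symm)))
    · exact Or.inr (Or.inr (hanti₂.injOn hq₂.le hc₂.le (hfq.trans hfc.symm)))
  · rintro (rfl | rfl | rfl) <;> assumption

def phi (Λ M q : ℝ) : ℝ := -Λ * q ^ 4 + 3 * q ^ 2 - 6 * M * q

@[fun_prop]
theorem continuous_phi (Λ M : ℝ) : Continuous (phi Λ M) := by
  unfold phi
  fun_prop

theorem hasDerivAt_phi (Λ M x : ℝ) :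
    HasDerivAt (phi Λ M) (-4 * Λ * x ^ 3 + 6 * x - 6 * M) x :=
  ((((hasDerivAt_pow 4 x).const_mul (-Λ)).add ((hasDerivAt_pow 2 x).const_mul 3)).sub
    ((hasDerivAt_id x).const_mul (6 * M))).congr_deriv (by ring)

theorem tendsto_phi_add_const_atBot {Λ : ℝ} (hΛ : 0 < Λ) (M c : ℝ) :
    Tendsto (fun q => phi Λ M q + c) atTop atBot := by
  have hlead : Tendsto (fun q : ℝ => -Λ + 3 * q⁻¹ ^ 2 - 6 * M * q⁻¹ ^ 3 + c * q⁻¹ ^ 4)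
      atTop (𝓝 (-Λ)) := by
    simpa only [Function.comp_def, ne_eq, OfNat.ofNat_ne_zero, not_false_eq_true, zero_pow,
      mul_zero, add_zero, sub_zero] using ((by fun_prop : Continuous fun t : ℝ =>
      -Λ + 3 * t ^ 2 - 6 * M * t ^ 3 + c * t ^ 4).tendsto 0).comp tendsto_inv_atTop_zero
  refine ((tendsto_pow_atTop (by norm_num : 4 ≠ 0)).atTop_mul_neg (neg_neg_of_pos hΛ)
    hlead).congr' ?_
  filter_upwards [eventually_ne_atTop 0] with q hq
  simp only [phi]
  field_simp

section CriticalPoints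

variable {Λ M q₂ q₃ : ℝ} (hΛ : 0 < Λ) (h2 : 0 < q₂) (h23 : q₂ < q₃)
  (hc2 : -4 * Λ * q₂ ^ 3 + 6 * q₂ - 6 * M = 0) (hc3 : -4 * Λ * q₃ ^ 3 + 6 * q₃ - 6 * M = 0)
include hc2 hc3

theorem phi_deriv_eq_of_critical (hne : q₂ ≠ q₃) (x : ℝ) :
    -4 * Λ * x ^ 3 + 6 * x - 6 * M = -(4 * Λ * (x + q₂ + q₃)) * ((x - q₂) * (x - q₃)) := by
  have hsub : q₂ - q₃ ≠ 0 := sub_ne_zero.mpr hne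
  have hsum : 4 * Λ * (q₂ ^ 2 + q₂ * q₃ + q₃ ^ 2) = 6 :=
    mul_left_cancel₀ hsub (by linear_combination hc3 - hc2)
  have hprod : 4 * Λ * (q₂ * q₃ * (q₂ + q₃)) = 6 * M :=
    mul_left_cancel₀ hsub (by linear_combination q₂ * hc3 - q₃ * hc2)
  linear_combination (-x) * hsum + hprod

include hΛ h2 h23

theorem strictAntiOn_phi_add_const_Icc_zero (c : ℝ) :
    StrictAntiOn (fun q => phi Λ M q + c) (Icc 0 q₂) := by
  refine strictAntiOn_of_hasDerivWithinAt_neg (convex_Icc 0 q₂) (by fun_prop)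
    (fun x _ => ((hasDerivAt_phi Λ M x).add_const c).hasDerivWithinAt) fun x hx => ?_
  rw [interior_Icc] at hx
  rw [phi_deriv_eq_of_critical hc2 hc3 h23.ne]
  exact mul_neg_of_neg_of_pos (neg_neg_of_pos (mul_pos (by positivity) (by linarith [hx.1])))
    (mul_pos_of_neg_of_neg (by linarith [hx.2]) (by linarith [hx.2]))

theorem strictMonoOn_phi_add_const_Icc (c : ℝ) :
    StrictMonoOn (fun q => phi Λ M q + c) (Icc q₂ q₃) := by
  refine strictMonoOn_of_hasDerivWithinAt_pos (convex_Icc q₂ q₃) (by fun_prop)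
    (fun x _ => ((hasDerivAt_phi Λ M x).add_const c).hasDerivWithinAt) fun x hx => ?_
  rw [interior_Icc] at hx
  rw [phi_deriv_eq_of_critical hc2 hc3 h23.ne]
  exact mul_pos_of_neg_of_neg (neg_neg_of_pos (mul_pos (by positivity) (by linarith [hx.1])))
    (mul_neg_of_pos_of_neg (by linarith [hx.1]) (by linarith [hx.2]))

theorem strictAntiOn_phi_add_const_Ici (c : ℝ) :
    StrictAntiOn (fun q => phi Λ M q + c) (Ici q₃) := by
  refine strictAntiOn_of_hasDerivWithinAt_neg (convex_Ici q₃) (by fun_prop)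
    (fun x _ => ((hasDerivAt_phi Λ M x).add_const c).hasDerivWithinAt) fun x hx => ?_
  rw [interior_Ici] at hx
  rw [phi_deriv_eq_of_critical hc2 hc3 h23.ne]
  exact mul_neg_of_neg_of_pos (neg_neg_of_pos (mul_pos (by positivity) (by linarith [hx.out])))
    (mul_pos (by linarith [hx.out]) (by linarith [hx.out]))

end CriticalPoints

theorem three_horizons_general (Λ M Q q₂ q₃ : ℝ) (hΛ : 0 < Λ) (hQ : Q ≠ 0)
    (h2 : 0 < q₂) (h23 : q₂ < q₃)
    (hc2 : -4 * Λ * q₂ ^ 3 + 6 * q₂ - 6 * M = 0)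
    (hc3 : -4 * Λ * q₃ ^ 3 + 6 * q₃ - 6 * M = 0)
    (hlow : -(-Λ * q₃ ^ 4 + 3 * q₃ ^ 2 - 6 * M * q₃) < 3 * Q ^ 2)
    (hhigh : 3 * Q ^ 2 < -(-Λ * q₂ ^ 4 + 3 * q₂ ^ 2 - 6 * M * q₂)) :
    ∃ a b c : ℝ, 0 < a ∧ a < b ∧ b < c ∧
      ∀ q : ℝ, 0 < q →
        ((-Λ * q ^ 4 + 3 * q ^ 2 - 6 * M * q) + 3 * Q ^ 2 = 0 ↔
          q = a ∨ q = b ∨ q = c) :=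
  exists_three_zeros_of_strictAntiOn_of_strictMonoOn (by fun_prop) h2 h23
    (strictAntiOn_phi_add_const_Icc_zero hΛ h2 h23 hc2 hc3 _)
    (strictMonoOn_phi_add_const_Icc hΛ h2 h23 hc2 hc3 _)
    (strictAntiOn_phi_add_const_Ici hΛ h2 h23 hc2 hc3 _)
    (by norm_num; positivity) (by linarith) (by linarith) (tendsto_phi_add_const_atBot hΛ M _)

/-- Three horizons: for `Λ > 0`, `M > 0`, `Q ≠ 0` with `Υ < 0`, and the two positive
critical points `q₂ < q₃` of `φ(q) = -Λq⁴ + 3q² - 6Mq`, if `-φ(q₃) < 3Q² < -φ(q₂)`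
then `φ(q) + 3Q² = 0` has exactly three distinct positive real roots. -/
theorem three_horizons (Λ M Q q₂ q₃ : ℝ) (hΛ : 0 < Λ) (hM : 0 < M) (hQ : Q ≠ 0)
    (hΥ : -1 / (8 * Λ ^ 3) + 9 * M ^ 2 / (16 * Λ ^ 2) < 0)
    (h2 : 0 < q₂) (h23 : q₂ < q₃)
    (hc2 : -4 * Λ * q₂ ^ 3 + 6 * q₂ - 6 * M = 0)
    (hc3 : -4 * Λ * q₃ ^ 3 + 6 * q₃ - 6 * M = 0)
    (hlow : -(-Λ * q₃ ^ 4 + 3 * q₃ ^ 2 - 6 * M * q₃) < 3 * Q ^ 2)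
    (hhigh : 3 * Q ^ 2 < -(-Λ * q₂ ^ 4 + 3 * q₂ ^ 2 - 6 * M * q₂)) :
    ∃ a b c : ℝ, 0 < a ∧ a < b ∧ b < c ∧
      ∀ q : ℝ, 0 < q →
        ((-Λ * q ^ 4 + 3 * q ^ 2 - 6 * M * q) + 3 * Q ^ 2 = 0 ↔
          q = a ∨ q = b ∨ q = c) :=
  three_horizons_general Λ M Q q₂ q₃ hΛ hQ h2 h23 hc2 hc3 hlow hhigh
end

section
/- Let Λ > 0, M > 0 with Υ := -1/(8Λ³) + 9M²/(16Λ²) = 0, and let q₂ > 0 be the double critical point of φ(q) = -Λq⁴ + 3q² - 6Mq. If 3Q² = -φ(q₂), then q₂ is a root of φ(q) + 3Q² of multiplicity exactly three. -/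
theorem triple_horizon_general (Λ M Q q₂ : ℝ)
    (hc : -4 * Λ * q₂ ^ 3 + 6 * q₂ - 6 * M = 0)
    (hcc : -12 * Λ * q₂ ^ 2 + 6 = 0)
    (hQ : 3 * Q ^ 2 = -(-Λ * q₂ ^ 4 + 3 * q₂ ^ 2 - 6 * M * q₂)) :
    ∃ c : ℝ, c ≠ q₂ ∧
      ∀ q : ℝ, (-Λ * q ^ 4 + 3 * q ^ 2 - 6 * M * q) + 3 * Q ^ 2 =
        -Λ * (q - q₂) ^ 3 * (q - c) := by
  have hq₂ : q₂ ≠ 0 := by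
    rintro rfl
    norm_num at hcc
  refine ⟨-3 * q₂, fun h => hq₂ (by linarith), fun q => ?_⟩
  -- Taylor expansion at `q₂`: `hQ`, `hc`, `hcc` kill the terms of order 0, 1, 2, and the
  -- remaining `φ'''(q₂)/6 · (q - q₂)³ - Λ (q - q₂)⁴` equals `-Λ (q - q₂)³ (q + 3 q₂)`.
  linear_combination hQ + (q - q₂) * hc + (q - q₂) ^ 2 / 2 * hcc

/-- Triple horizon: for `Λ > 0`, `M > 0` with `Υ = 0` and `q₂ > 0` the double
critical point of `φ(q) = -Λq⁴ + 3q² - 6Mq` (so `φ'(q₂) = 0` and `φ''(q₂) = 0`),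
if `3Q² = -φ(q₂)` then `q₂` is a root of `φ + 3Q²` of multiplicity exactly three. -/
theorem triple_horizon (Λ M Q q₂ : ℝ) (hΛ : 0 < Λ) (hM : 0 < M)
    (hΥ : -1 / (8 * Λ ^ 3) + 9 * M ^ 2 / (16 * Λ ^ 2) = 0)
    (h2 : 0 < q₂)
    (hc : -4 * Λ * q₂ ^ 3 + 6 * q₂ - 6 * M = 0)
    (hcc : -12 * Λ * q₂ ^ 2 + 6 = 0)
    (hQ : 3 * Q ^ 2 = -(-Λ * q₂ ^ 4 + 3 * q₂ ^ 2 - 6 * M * q₂)) :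
    ∃ c : ℝ, c ≠ q₂ ∧
      ∀ q : ℝ, (-Λ * q ^ 4 + 3 * q ^ 2 - 6 * M * q) + 3 * Q ^ 2 =
        -Λ * (q - q₂) ^ 3 * (q - c) :=
  triple_horizon_general Λ M Q q₂ hc hcc hQ
end

section
/- Let q : I → (0,∞) be a C² function on a real interval with q' > 0 everywhere, and suppose (q²)'' = 2(K - Λq² - Q²/q²)·q' for constants K, Λ, Q. Then there exists a constant M such that q' = K - 2M/q + Q²/q² - Λq²/3 on I. -/
/-!
Multiplying out `(q²)'' = 2 (q q')'`, the equation says that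
`E = q q' - K q - Q²/q + Λ q³/3` has derivative `(q q')' - (K - Λ q² - Q²/q²) q' = 0`.
So `E` is a constant on the interval, which we write as `-2M`; dividing by `q` gives the
Schwarzschild-type form of `q'`.
-/

noncomputable def staticFirstIntegral (K Λ Q : ℝ) (q qd : ℝ → ℝ) (x : ℝ) : ℝ :=
  q x * qd x - K * q x - Q ^ 2 / q x + Λ * q x ^ 3 / 3

theorem hasDerivAt_staticFirstIntegral {K Λ Q x qd₁ qdd₁ : ℝ} {q qd : ℝ → ℝ}
    (hq : HasDerivAt q qd₁ x) (hqd : HasDerivAt qd qdd₁ x) (hx : q x ≠ 0) :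
    HasDerivAt (staticFirstIntegral K Λ Q q qd)
      (qd₁ * qd x + q x * qdd₁ - (K - Λ * q x ^ 2 - Q ^ 2 / q x ^ 2) * qd₁) x := by
  refine ((((hq.mul hqd).sub (hq.const_mul K)).sub ((hasDerivAt_const x (Q ^ 2)).div hq hx)).add
    (((hq.pow 3).const_mul Λ).div_const 3)).congr_deriv ?_
  field_simp
  ring

theorem first_integral_static_general (a b K Λ Q : ℝ) (q qd qdd : ℝ → ℝ)
    (hq : ∀ x ∈ Set.Ioo a b, HasDerivAt q (qd x) x)
    (hqd : ∀ x ∈ Set.Ioo a b, HasDerivAt qd (qdd x) x)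
    (hpos : ∀ x ∈ Set.Ioo a b, 0 < q x)
    (heq : ∀ x ∈ Set.Ioo a b,
      2 * ((qd x) ^ 2 + q x * qdd x) =
        2 * (K - Λ * (q x) ^ 2 - Q ^ 2 / (q x) ^ 2) * qd x) :
    ∃ M : ℝ, ∀ x ∈ Set.Ioo a b,
      qd x = K - 2 * M / q x + Q ^ 2 / (q x) ^ 2 - Λ * (q x) ^ 2 / 3 := by
  have hE : ∀ x ∈ Set.Ioo a b, HasDerivAt (staticFirstIntegral K Λ Q q qd) 0 x := by
    intro x hx
    convert hasDerivAt_staticFirstIntegral (K := K) (Λ := Λ) (Q := Q)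
      (hq x hx) (hqd x hx) (hpos x hx).ne' using 1
    linear_combination -heq x hx / 2
  obtain ⟨C, hC⟩ := isOpen_Ioo.exists_is_const_of_deriv_eq_zero isPreconnected_Ioo
    (fun x hx => (hE x hx).differentiableAt.differentiableWithinAt)
    (fun x hx => (hE x hx).deriv)
  refine ⟨-C / 2, fun x hx => ?_⟩
  have hCx : staticFirstIntegral K Λ Q q qd x = C := hC x hx
  have hqx : q x ≠ 0 := (hpos x hx).ne'
  unfold staticFirstIntegral at hCx
  field_simp at hCx ⊢
  linear_combination hCx

/-- First integral of the static Einstein equation: if `q > 0` is `C²` on an open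
interval with `q' > 0` and `(q²)'' = 2(K - Λq² - Q²/q²)·q'`, then there is a
constant `M` with `q' = K - 2M/q + Q²/q² - Λq²/3`. -/
theorem first_integral_static (a b K Λ Q : ℝ) (q qd qdd : ℝ → ℝ)
    (hq : ∀ x ∈ Set.Ioo a b, HasDerivAt q (qd x) x)
    (hqd : ∀ x ∈ Set.Ioo a b, HasDerivAt qd (qdd x) x)
    (hpos : ∀ x ∈ Set.Ioo a b, 0 < q x)
    (hd : ∀ x ∈ Set.Ioo a b, 0 < qd x)
    (heq : ∀ x ∈ Set.Ioo a b,
      2 * ((qd x) ^ 2 + q x * qdd x) =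
        2 * (K - Λ * (q x) ^ 2 - Q ^ 2 / (q x) ^ 2) * qd x) :
    ∃ M : ℝ, ∀ x ∈ Set.Ioo a b,
      qd x = K - 2 * M / q x + Q ^ 2 / (q x) ^ 2 - Λ * (q x) ^ 2 / 3 :=
  first_integral_static_general a b K Λ Q q qd qdd hq hqd hpos heq
end
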